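/- Algorithm A_DAsync solves Collaborative 2-AtomicAppends in the asynchronous model when at most one client crashes: in every asynchronous execution in which at most one of the two clients crashes, either both r_A is eventually in DLO_A and r_B is eventually in DLO_B, or neither record is ever appended (safety); and if neither client crashes, both records are eventually appended (liveness). -/
import Mathlib


/-!
STATEMENT 4. Algorithm A_DAsync solves Collaborative 2-AtomicAppends in the asynchronous
model when at most one client crashes: in every asynchronous execution in which at most
one of the two clients crashes, either both r_A is eventually in DLO_A and r_B is
eventually in DLO_B, or neither record is ever appended (safety); and if neither client
crashes, both records are eventually appended (liveness).

Modeling: an asynchronous execution of A_DAsync is described by, for each client X, the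
facts of whether in this execution X ever crashes (`crashed X`), X sends its record
(`sent X`), X receives the other client's record in a message (`recvd X`), some get by X
on the other ledger returns a set containing the other client's record (`getSaw X`),
X's append of its own record r_X to DLO_X completes (`appOwn X`), and X's (delegated)
append of the other client's record to the other ledger completes (`appOther X`).
Only these two kinds of appends can place a record in a ledger, and appends are
idempotent, so "r_X is eventually in DLO_X" is `inLedger appOwn appOther X`.
The guarantees of the asynchronous model and the steps of A_DAsync appear as hypotheses
quantified over all executions.
-/

/-- The two clients. -/
inductive Client where
  | A
  | B
deriving DecidableEq

/-- The other client. -/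
def Client.other : Client → Client
  | .A => .B
  | .B => .A

/-- Record r_X is eventually in DLO_X: it was appended either by X itself or by the
other client on X's behalf. -/
def inLedger (appOwn appOther : Client → Prop) (X : Client) : Prop :=
  appOwn X ∨ appOther X.other

theorem adasync_solves_collaborative_atomic_appends
    (crashed sent recvd getSaw appOwn appOther : Client → Prop)
    -- at most one of the two clients crashes
    (h_atMostOne : ¬ (crashed Client.A ∧ crashed Client.B))
    -- A_DAsync: the first step of a client is to send its record; a client that never
    -- crashes takes its first step
    (h_send : ∀ X, ¬ crashed X → sent X)
    -- asynchrony: a message sent to a client that never crashes is eventually delivered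
    (h_deliver : ∀ X, sent X → ¬ crashed X.other → recvd X.other)
    -- a client receives the other client's record only if the other client sent it
    (h_recv : ∀ X, recvd X → sent X.other)
    -- a get returns the current ledger contents, so a get by X can see the other
    -- client's record only if that record is (eventually) in the other ledger
    (h_get : ∀ X, getSaw X → inLedger appOwn appOther X.other)
    -- A_DAsync: a client appends its own record only after having sent its record and
    (h_own : ∀ X, appOwn X → sent X ∧ (recvd X ∨ getSaw X))
    -- A_DAsync: a client appends the other client's record only after its own append
    (h_other : ∀ X, appOther X → appOwn X)
    -- its own append, and afterwards the other client's record ends up in the other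
    -- ledger (it is already present, or the client appends it and the append completes)
    (h_progress : ∀ X, ¬ crashed X → (recvd X ∨ getSaw X) →
        appOwn X ∧ inLedger appOwn appOther X.other) :
    -- safety: either both records are eventually appended, or neither ever is
    ((inLedger appOwn appOther Client.A ∧ inLedger appOwn appOther Client.B) ∨
      (¬ inLedger appOwn appOther Client.A ∧ ¬ inLedger appOwn appOther Client.B)) ∧
    -- liveness: if neither client crashes, both records are eventually appended
    ((¬ crashed Client.A ∧ ¬ crashed Client.B) →
      (inLedger appOwn appOther Client.A ∧ inLedger appOwn appOther Client.B)) := by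
  have h_oo : ∀ X : Client, X.other.other = X := by intro X; cases X <;> rfl
  -- propagation: if X's record is in its ledger, so is the other's
  have key : ∀ X : Client, inLedger appOwn appOther X →
      inLedger appOwn appOther X.other := by
    intro X hX
    rcases hX with hOwn | hOth
    · rcases (h_own X hOwn).2 with hr | hg
      ·
        by_cases hcX : crashed X
        · -- then X.other never crashes
          have hcO : ¬ crashed X.other := by
            intro hcO
            apply h_atMostOne
            cases X
            · exact ⟨hcX, hcO⟩
            · exact ⟨hcO, hcX⟩
          have hsent : sent X := (h_own X hOwn).1
          have hrO : recvd X.other := h_deliver X hsent hcO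
          have := h_progress X.other hcO (Or.inl hrO)
          exact Or.inl this.1
        · have := (h_progress X hcX (Or.inl hr)).2
          simpa [h_oo] using this
      · have := h_get X hg
        simpa [h_oo] using this
    · exact Or.inl (h_other _ hOth)
  constructor
  · by_cases hA : inLedger appOwn appOther Client.A
    · exact Or.inl ⟨hA, key Client.A hA⟩
    · by_cases hB : inLedger appOwn appOther Client.B
      · exact Or.inl ⟨key Client.B hB, hB⟩
      · exact Or.inr ⟨hA, hB⟩
  · rintro ⟨hcA, hcB⟩
    have hsA : sent Client.A := h_send _ hcA
    have hsB : sent Client.B := h_send _ hcB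
    have hrB : recvd Client.B := h_deliver Client.A hsA hcB
    have hrA : recvd Client.A := h_deliver Client.B hsB hcA
    exact ⟨Or.inl (h_progress _ hcA (Or.inl hrA)).1,
           Or.inl (h_progress _ hcB (Or.inl hrB)).1⟩
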